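/- arXiv:2405.16577 — 3 statements merged into one kernel-verified Lean document; each statement's English description precedes it below -/
import Mathlib

section
/- Let Ω ⊆ ℝ^d be measurable, q a probability density on Ω, and for each x₁ ∈ Ω let p_t(x|x₁) be a conditional probability path and v_t(x|x₁) a conditional velocity field, all measurable with the integrals below finite. Define p_t(x) = ∫_Ω p_t(x|x₁) q(x₁) dx₁, assume p_t(x) > 0 for all x in the interior of Ω and t ∈ [0,1], and define v_t(x) = ∫_Ω v_t(x|x₁) p_t(x|x₁) q(x₁) / p_t(x) dx₁. For any measurable function u : Ω × [0,1] → ℝ^d define the reflected flow matching objective L_RFM(u) = ∫₀¹ ∫_Ω ‖u(x,t) − v_t(x)‖² p_t(x) dx dt and the conditional reflected flow matching objective L_CRFM(u) = ∫₀¹ ∫_Ω ∫_Ω ‖u(x,t) − v_t(x|x₁)‖² p_t(x|x₁) q(x₁) dx₁ dx dt. Then L_CRFM(u) − L_RFM(u) = ∫₀¹ ( ∫_Ω ∫_Ω ‖v_t(x|x₁)‖² p_t(x|x₁) q(x₁) dx₁ dx − ∫_Ω ‖v_t(x)‖² p_t(x) dx ) dt, a quantity that does not depend on u; consequently, for any two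 measurable u₁, u₂ : Ω × [0,1] → ℝ^d (with the objectives finite), L_CRFM(u₁) − L_CRFM(u₂) = L_RFM(u₁) − L_RFM(u₂), so the two objectives have identical minimizers and identical gradients with respect to any parametrization of u. -/
open MeasureTheory Set

variable {d : ℕ}

/-- The marginal probability path `p_t(x) = ∫_Ω p_t(x|x₁) q(x₁) dx₁`. -/
noncomputable def marginalPath (Ω : Set (EuclideanSpace ℝ (Fin d)))
    (q : EuclideanSpace ℝ (Fin d) → ℝ)
    (p : EuclideanSpace ℝ (Fin d) → ℝ → EuclideanSpace ℝ (Fin d) → ℝ)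
    (t : ℝ) (x : EuclideanSpace ℝ (Fin d)) : ℝ :=
  ∫ x₁ in Ω, p x₁ t x * q x₁

/-- The marginal velocity field
`v_t(x) = ∫_Ω v_t(x|x₁) p_t(x|x₁) q(x₁) / p_t(x) dx₁`. -/
noncomputable def marginalVel (Ω : Set (EuclideanSpace ℝ (Fin d)))
    (q : EuclideanSpace ℝ (Fin d) → ℝ)
    (p : EuclideanSpace ℝ (Fin d) → ℝ → EuclideanSpace ℝ (Fin d) → ℝ)
    (v : EuclideanSpace ℝ (Fin d) → ℝ → EuclideanSpace ℝ (Fin d) → EuclideanSpace ℝ (Fin d))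
    (t : ℝ) (x : EuclideanSpace ℝ (Fin d)) : EuclideanSpace ℝ (Fin d) :=
  (marginalPath Ω q p t x)⁻¹ • ∫ x₁ in Ω, (p x₁ t x * q x₁) • v x₁ t x

/-- The reflected flow matching objective
`L_RFM(u) = ∫₀¹ ∫_Ω ‖u(x,t) − v_t(x)‖² p_t(x) dx dt`. -/
noncomputable def LRFM (Ω : Set (EuclideanSpace ℝ (Fin d)))
    (q : EuclideanSpace ℝ (Fin d) → ℝ)
    (p : EuclideanSpace ℝ (Fin d) → ℝ → EuclideanSpace ℝ (Fin d) → ℝ)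
    (v : EuclideanSpace ℝ (Fin d) → ℝ → EuclideanSpace ℝ (Fin d) → EuclideanSpace ℝ (Fin d))
    (u : EuclideanSpace ℝ (Fin d) → ℝ → EuclideanSpace ℝ (Fin d)) : ℝ :=
  ∫ t in Icc (0:ℝ) 1, ∫ x in Ω, ‖u x t - marginalVel Ω q p v t x‖ ^ 2 * marginalPath Ω q p t x

/-- The conditional reflected flow matching objective
`L_CRFM(u) = ∫₀¹ ∫_Ω ∫_Ω ‖u(x,t) − v_t(x|x₁)‖² p_t(x|x₁) q(x₁) dx₁ dx dt`. -/
noncomputable def LCRFM (Ω : Set (EuclideanSpace ℝ (Fin d)))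
    (q : EuclideanSpace ℝ (Fin d) → ℝ)
    (p : EuclideanSpace ℝ (Fin d) → ℝ → EuclideanSpace ℝ (Fin d) → ℝ)
    (v : EuclideanSpace ℝ (Fin d) → ℝ → EuclideanSpace ℝ (Fin d) → EuclideanSpace ℝ (Fin d))
    (u : EuclideanSpace ℝ (Fin d) → ℝ → EuclideanSpace ℝ (Fin d)) : ℝ :=
  ∫ t in Icc (0:ℝ) 1, ∫ x in Ω, ∫ x₁ in Ω, ‖u x t - v x₁ t x‖ ^ 2 * (p x₁ t x * q x₁)

/-- `u` is measurable and the integrals appearing in `L_RFM(u)` and `L_CRFM(u)`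
are finite. -/
def Admissible (Ω : Set (EuclideanSpace ℝ (Fin d)))
    (q : EuclideanSpace ℝ (Fin d) → ℝ)
    (p : EuclideanSpace ℝ (Fin d) → ℝ → EuclideanSpace ℝ (Fin d) → ℝ)
    (v : EuclideanSpace ℝ (Fin d) → ℝ → EuclideanSpace ℝ (Fin d) → EuclideanSpace ℝ (Fin d))
    (u : EuclideanSpace ℝ (Fin d) → ℝ → EuclideanSpace ℝ (Fin d)) : Prop :=
  Measurable (fun z : EuclideanSpace ℝ (Fin d) × ℝ => u z.1 z.2) ∧
  (∀ t ∈ Icc (0:ℝ) 1,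
    IntegrableOn (fun x => ‖u x t - marginalVel Ω q p v t x‖ ^ 2 * marginalPath Ω q p t x) Ω) ∧
  (∀ t ∈ Icc (0:ℝ) 1,
    Integrable
      (fun z : EuclideanSpace ℝ (Fin d) × EuclideanSpace ℝ (Fin d) =>
        ‖u z.1 t - v z.2 t z.1‖ ^ 2 * (p z.2 t z.1 * q z.2))
      ((volume.restrict Ω).prod (volume.restrict Ω))) ∧
  IntegrableOn
    (fun t => ∫ x in Ω, ‖u x t - marginalVel Ω q p v t x‖ ^ 2 * marginalPath Ω q p t x)
    (Icc (0:ℝ) 1) ∧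
  IntegrableOn
    (fun t => ∫ x in Ω, ∫ x₁ in Ω, ‖u x t - v x₁ t x‖ ^ 2 * (p x₁ t x * q x₁))
    (Icc (0:ℝ) 1)

/-! For fixed `t` and `x`, the weights `x₁ ↦ p_t(x|x₁) q(x₁)` have total mass `p_t(x)`, and
`v_t(x)` is the mean of `v_t(x|·)` under them. The bias–variance decomposition
`∫ ‖c - f‖² w = ‖c - m‖² ∫ w + (∫ ‖f‖² w - ‖m‖² ∫ w)` for a weighted mean `m`, applied with
`c = u(x,t)`, shows that the inner integrand of `L_CRFM` exceeds that of `L_RFM` by a quantity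
not involving `u`. Integrating over `x` (Fubini) and then over `t` gives the theorem. -/

open scoped RealInnerProductSpace

section WeightedMean

variable {α E : Type*} [MeasurableSpace α] {μ : Measure α}
  [NormedAddCommGroup E] [InnerProductSpace ℝ E]
  {w : α → ℝ} {f : α → E}

variable (μ) in
noncomputable def weightedMean (w : α → ℝ) (f : α → E) : E :=
  (∫ a, w a ∂μ)⁻¹ • ∫ a, w a • f a ∂μ

/-- At `∫ w = 0` the weighted mean is the junk value `0`; the identity survives because then
`w = 0` a.e. -/
theorem integral_smul_weightedMean (hw_nonneg : 0 ≤ᵐ[μ] w) (hw : Integrable w μ) :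
    (∫ a, w a ∂μ) • weightedMean μ w f = ∫ a, w a • f a ∂μ := by
  rcases eq_or_ne (∫ a, w a ∂μ) 0 with h0 | h0
  · have hw0 : w =ᵐ[μ] 0 := (integral_eq_zero_iff_of_nonneg_ae hw_nonneg hw).mp h0
    rw [h0, zero_smul, eq_comm]
    refine integral_eq_zero_of_ae ?_
    filter_upwards [hw0] with a ha
    simp [ha]
  · rw [weightedMean, smul_inv_smul₀ h0]

theorem MeasureTheory.Integrable.smul_of_integrable_norm_sq_mul (hw_nonneg : 0 ≤ᵐ[μ] w)
    (hw : Integrable w μ) (hf_meas : AEStronglyMeasurable f μ)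
    (hf : Integrable (fun a => ‖f a‖ ^ 2 * w a) μ) :
    Integrable (fun a => w a • f a) μ := by
  refine (hw.add hf).mono' (hw.aestronglyMeasurable.smul hf_meas) ?_
  filter_upwards [hw_nonneg] with a ha
  have : ‖f a‖ ≤ 1 + ‖f a‖ ^ 2 := by nlinarith [sq_nonneg (‖f a‖ - 1)]
  rw [Pi.add_apply, norm_smul, Real.norm_of_nonneg ha]
  nlinarith [mul_le_mul_of_nonneg_left this ha]

theorem integral_norm_sub_sq_mul [CompleteSpace E] (hw_nonneg : 0 ≤ᵐ[μ] w) (hw : Integrable w μ)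
    (hf_meas : AEStronglyMeasurable f μ) (hf : Integrable (fun a => ‖f a‖ ^ 2 * w a) μ)
    (c : E) :
    ∫ a, ‖c - f a‖ ^ 2 * w a ∂μ
      = ‖c - weightedMean μ w f‖ ^ 2 * ∫ a, w a ∂μ
        + ((∫ a, ‖f a‖ ^ 2 * w a ∂μ) - ‖weightedMean μ w f‖ ^ 2 * ∫ a, w a ∂μ) := by
  have hwf := hw.smul_of_integrable_norm_sq_mul hw_nonneg hf_meas hf
  have hcross : ∫ a, ⟪c, w a • f a⟫ ∂μ = ⟪c, weightedMean μ w f⟫ * ∫ a, w a ∂μ := by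
    rw [integral_inner hwf, ← integral_smul_weightedMean hw_nonneg hw, real_inner_smul_right,
      mul_comm]
  have hexpand : (fun a => ‖c - f a‖ ^ 2 * w a)
      = fun a => (‖c‖ ^ 2 * w a - 2 * ⟪c, w a • f a⟫) + ‖f a‖ ^ 2 * w a := by
    ext a
    rw [norm_sub_sq_real, real_inner_smul_right]
    ring
  have hc : Integrable (fun a => ‖c‖ ^ 2 * w a) μ := hw.const_mul _
  have hcf : Integrable (fun a => 2 * ⟪c, w a • f a⟫) μ := (hwf.const_inner c).const_mul 2
  have hsub : Integrable (fun a => ‖c‖ ^ 2 * w a - 2 * ⟪c, w a • f a⟫) μ := hc.sub hcf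
  rw [hexpand, integral_add hsub hf, integral_sub hc hcf, integral_const_mul,
    integral_const_mul, hcross, norm_sub_sq_real]
  ring

end WeightedMean

section Product

variable {α β E : Type*} [MeasurableSpace α] [MeasurableSpace β] {μ : Measure α} {ν : Measure β}
  [SFinite μ] [SFinite ν] [NormedAddCommGroup E] [InnerProductSpace ℝ E] [CompleteSpace E]

theorem integral_integral_norm_sub_sq_mul_sub {w : α → β → ℝ} {f : α → β → E} {c : α → E}
    (hw_nonneg : ∀ᵐ x ∂μ, 0 ≤ᵐ[ν] w x)
    (hw : Integrable (fun z : α × β => w z.1 z.2) (μ.prod ν))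
    (hf_meas : ∀ᵐ x ∂μ, AEStronglyMeasurable (f x) ν)
    (hf : Integrable (fun z : α × β => ‖f z.1 z.2‖ ^ 2 * w z.1 z.2) (μ.prod ν))
    (hcf : Integrable (fun z : α × β => ‖c z.1 - f z.1 z.2‖ ^ 2 * w z.1 z.2) (μ.prod ν))
    (hcm : Integrable (fun x => ‖c x - weightedMean ν (w x) (f x)‖ ^ 2 * ∫ y, w x y ∂ν) μ)
    (hm : Integrable (fun x => ‖weightedMean ν (w x) (f x)‖ ^ 2 * ∫ y, w x y ∂ν) μ) :
    (∫ x, ∫ y, ‖c x - f x y‖ ^ 2 * w x y ∂ν ∂μ)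
        - ∫ x, ‖c x - weightedMean ν (w x) (f x)‖ ^ 2 * ∫ y, w x y ∂ν ∂μ
      = (∫ x, ∫ y, ‖f x y‖ ^ 2 * w x y ∂ν ∂μ)
        - ∫ x, ‖weightedMean ν (w x) (f x)‖ ^ 2 * ∫ y, w x y ∂ν ∂μ := by
  rw [← integral_sub hcf.integral_prod_left hcm, ← integral_sub hf.integral_prod_left hm]
  refine integral_congr_ae ?_
  filter_upwards [hw_nonneg, hw.prod_right_ae, hf_meas, hf.prod_right_ae]
    with x hwx hwx_int hfx_meas hfx
  rw [integral_norm_sub_sq_mul hwx hwx_int hfx_meas hfx]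
  ring

theorem integrable_prod_mul_of_integral_eq_one {k : β → α → ℝ} {g : β → ℝ}
    (hk_meas : AEStronglyMeasurable (fun z : α × β => k z.2 z.1) (μ.prod ν))
    (hk_nonneg : ∀ᵐ y ∂ν, 0 ≤ᵐ[μ] k y) (hk_int : ∀ᵐ y ∂ν, ∫ x, k y x ∂μ = 1)
    (hg : Integrable g ν) :
    Integrable (fun z : α × β => k z.2 z.1 * g z.2) (μ.prod ν) := by
  refine (integrable_prod_iff' (hk_meas.mul hg.1.comp_snd)).mpr ⟨?_, ?_⟩
  · filter_upwards [hk_int] with y hy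
    exact (integrable_of_integral_eq_one hy).mul_const (g y)
  · refine hg.norm.congr ?_
    filter_upwards [hk_nonneg, hk_int] with y hy_nonneg hy
    calc ‖g y‖ = (∫ x, k y x ∂μ) * ‖g y‖ := by rw [hy, one_mul]
      _ = ∫ x, ‖k y x * g y‖ ∂μ := by
        rw [← integral_mul_const]
        refine integral_congr_ae ?_
        filter_upwards [hy_nonneg] with x hx
        rw [norm_mul, Real.norm_of_nonneg hx]

end Product

theorem lcrfm_sub_lrfm_const_general
    (Ω : Set (EuclideanSpace ℝ (Fin d))) (hΩ : MeasurableSet Ω)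
    (q : EuclideanSpace ℝ (Fin d) → ℝ)
    (hq_nonneg : ∀ x₁ ∈ Ω, 0 ≤ q x₁) (hq_int : ∫ x₁ in Ω, q x₁ = 1)
    (p : EuclideanSpace ℝ (Fin d) → ℝ → EuclideanSpace ℝ (Fin d) → ℝ)
    (hp_meas : Measurable fun z : EuclideanSpace ℝ (Fin d) × ℝ × EuclideanSpace ℝ (Fin d) =>
      p z.1 z.2.1 z.2.2)
    (hp_nonneg : ∀ x₁ ∈ Ω, ∀ t ∈ Icc (0:ℝ) 1, ∀ x ∈ Ω, 0 ≤ p x₁ t x)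
    (hp_int : ∀ x₁ ∈ Ω, ∀ t ∈ Icc (0:ℝ) 1, ∫ x in Ω, p x₁ t x = 1)
    (v : EuclideanSpace ℝ (Fin d) → ℝ → EuclideanSpace ℝ (Fin d) → EuclideanSpace ℝ (Fin d))
    (hv_meas : Measurable fun z : EuclideanSpace ℝ (Fin d) × ℝ × EuclideanSpace ℝ (Fin d) =>
      v z.1 z.2.1 z.2.2)
    -- the integrals involving only the conditional/marginal velocity fields are finite
    (hv_int : ∀ t ∈ Icc (0:ℝ) 1,
      Integrable
        (fun z : EuclideanSpace ℝ (Fin d) × EuclideanSpace ℝ (Fin d) =>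
          ‖v z.2 t z.1‖ ^ 2 * (p z.2 t z.1 * q z.2))
        ((volume.restrict Ω).prod (volume.restrict Ω)))
    (hvM_int : ∀ t ∈ Icc (0:ℝ) 1,
      IntegrableOn (fun x => ‖marginalVel Ω q p v t x‖ ^ 2 * marginalPath Ω q p t x) Ω)
    -- a fixed admissible velocity model
    (u : EuclideanSpace ℝ (Fin d) → ℝ → EuclideanSpace ℝ (Fin d))
    (hu : Admissible Ω q p v u) :
    LCRFM Ω q p v u - LRFM Ω q p v u
      = ∫ t in Icc (0:ℝ) 1,
          ((∫ x in Ω, ∫ x₁ in Ω, ‖v x₁ t x‖ ^ 2 * (p x₁ t x * q x₁))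
            - ∫ x in Ω, ‖marginalVel Ω q p v t x‖ ^ 2 * marginalPath Ω q p t x) ∧
    ∀ u₁ u₂ : EuclideanSpace ℝ (Fin d) → ℝ → EuclideanSpace ℝ (Fin d),
      Admissible Ω q p v u₁ → Admissible Ω q p v u₂ →
        LCRFM Ω q p v u₁ - LCRFM Ω q p v u₂ = LRFM Ω q p v u₁ - LRFM Ω q p v u₂ := by
  have hΩ_ae : ∀ᵐ x ∂(volume.restrict Ω), x ∈ Ω := ae_restrict_mem hΩ
  have htime : ∀ t ∈ Icc (0:ℝ) 1, ∀ u', Admissible Ω q p v u' →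
      (∫ x in Ω, ∫ x₁ in Ω, ‖u' x t - v x₁ t x‖ ^ 2 * (p x₁ t x * q x₁))
          - ∫ x in Ω, ‖u' x t - marginalVel Ω q p v t x‖ ^ 2 * marginalPath Ω q p t x
        = (∫ x in Ω, ∫ x₁ in Ω, ‖v x₁ t x‖ ^ 2 * (p x₁ t x * q x₁))
          - ∫ x in Ω, ‖marginalVel Ω q p v t x‖ ^ 2 * marginalPath Ω q p t x := by
    intro t ht u' hu'
    refine integral_integral_norm_sub_sq_mul_sub (w := fun x x₁ => p x₁ t x * q x₁)
      (f := fun x x₁ => v x₁ t x) (c := fun x => u' x t) ?_ ?_ ?_ (hv_int t ht) (hu'.2.2.1 t ht)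
      (hu'.2.1 t ht) (hvM_int t ht)
    · filter_upwards [hΩ_ae] with x hx
      filter_upwards [hΩ_ae] with x₁ hx₁
      exact mul_nonneg (hp_nonneg x₁ hx₁ t ht x hx) (hq_nonneg x₁ hx₁)
    · refine integrable_prod_mul_of_integral_eq_one (k := fun x₁ x => p x₁ t x) ?_ ?_ ?_
        (integrable_of_integral_eq_one hq_int)
      · exact (hp_meas.comp (f := fun z : EuclideanSpace ℝ (Fin d) × EuclideanSpace ℝ (Fin d) =>
          (z.2, t, z.1)) (by fun_prop)).aestronglyMeasurable
      · filter_upwards [hΩ_ae] with x₁ hx₁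
        filter_upwards [hΩ_ae] with x hx
        exact hp_nonneg x₁ hx₁ t ht x hx
      · filter_upwards [hΩ_ae] with x₁ hx₁ using hp_int x₁ hx₁ t ht
    · exact .of_forall fun x =>
        (hv_meas.comp (f := fun x₁ => (x₁, t, x)) (by fun_prop)).aestronglyMeasurable
  have hdiff : ∀ u', Admissible Ω q p v u' → LCRFM Ω q p v u' - LRFM Ω q p v u'
      = ∫ t in Icc (0:ℝ) 1,
          ((∫ x in Ω, ∫ x₁ in Ω, ‖v x₁ t x‖ ^ 2 * (p x₁ t x * q x₁))
            - ∫ x in Ω, ‖marginalVel Ω q p v t x‖ ^ 2 * marginalPath Ω q p t x) := fun u' hu' => by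
    rw [LCRFM, LRFM, ← integral_sub hu'.2.2.2.2 hu'.2.2.2.1]
    exact setIntegral_congr_fun measurableSet_Icc fun t ht => htime t ht u' hu'
  exact ⟨hdiff u hu, fun u₁ u₂ h₁ h₂ => by linarith [hdiff u₁ h₁, hdiff u₂ h₂]⟩

/-- **The RFM and CRFM objectives differ by a constant independent of the
velocity model** (Theorem 3 of "Reflected Flow Matching"). Hence
`L_CRFM(u₁) − L_CRFM(u₂) = L_RFM(u₁) − L_RFM(u₂)` for any two admissible
velocity models, so the two objectives have identical minimizers and
gradients. -/
theorem lcrfm_sub_lrfm_const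
    (Ω : Set (EuclideanSpace ℝ (Fin d))) (hΩ : MeasurableSet Ω)
    (q : EuclideanSpace ℝ (Fin d) → ℝ) (hq_meas : Measurable q)
    (hq_nonneg : ∀ x₁ ∈ Ω, 0 ≤ q x₁) (hq_int : ∫ x₁ in Ω, q x₁ = 1)
    (p : EuclideanSpace ℝ (Fin d) → ℝ → EuclideanSpace ℝ (Fin d) → ℝ)
    (hp_meas : Measurable fun z : EuclideanSpace ℝ (Fin d) × ℝ × EuclideanSpace ℝ (Fin d) =>
      p z.1 z.2.1 z.2.2)
    (hp_nonneg : ∀ x₁ ∈ Ω, ∀ t ∈ Icc (0:ℝ) 1, ∀ x ∈ Ω, 0 ≤ p x₁ t x)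
    (hp_int : ∀ x₁ ∈ Ω, ∀ t ∈ Icc (0:ℝ) 1, ∫ x in Ω, p x₁ t x = 1)
    (v : EuclideanSpace ℝ (Fin d) → ℝ → EuclideanSpace ℝ (Fin d) → EuclideanSpace ℝ (Fin d))
    (hv_meas : Measurable fun z : EuclideanSpace ℝ (Fin d) × ℝ × EuclideanSpace ℝ (Fin d) =>
      v z.1 z.2.1 z.2.2)
    -- the marginal probability path is positive in the interior of Ω
    (hpos : ∀ t ∈ Icc (0:ℝ) 1, ∀ x ∈ interior Ω, 0 < marginalPath Ω q p t x)
    -- the integrals involving only the conditional/marginal velocity fields are finite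
    (hv_int : ∀ t ∈ Icc (0:ℝ) 1,
      Integrable
        (fun z : EuclideanSpace ℝ (Fin d) × EuclideanSpace ℝ (Fin d) =>
          ‖v z.2 t z.1‖ ^ 2 * (p z.2 t z.1 * q z.2))
        ((volume.restrict Ω).prod (volume.restrict Ω)))
    (hvM_int : ∀ t ∈ Icc (0:ℝ) 1,
      IntegrableOn (fun x => ‖marginalVel Ω q p v t x‖ ^ 2 * marginalPath Ω q p t x) Ω)
    (hv_int_t : IntegrableOn
      (fun t => ∫ x in Ω, ∫ x₁ in Ω, ‖v x₁ t x‖ ^ 2 * (p x₁ t x * q x₁)) (Icc (0:ℝ) 1))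
    (hvM_int_t : IntegrableOn
      (fun t => ∫ x in Ω, ‖marginalVel Ω q p v t x‖ ^ 2 * marginalPath Ω q p t x)
      (Icc (0:ℝ) 1))
    -- a fixed admissible velocity model
    (u : EuclideanSpace ℝ (Fin d) → ℝ → EuclideanSpace ℝ (Fin d))
    (hu : Admissible Ω q p v u) :
    LCRFM Ω q p v u - LRFM Ω q p v u
      = ∫ t in Icc (0:ℝ) 1,
          ((∫ x in Ω, ∫ x₁ in Ω, ‖v x₁ t x‖ ^ 2 * (p x₁ t x * q x₁))
            - ∫ x in Ω, ‖marginalVel Ω q p v t x‖ ^ 2 * marginalPath Ω q p t x) ∧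
    ∀ u₁ u₂ : EuclideanSpace ℝ (Fin d) → ℝ → EuclideanSpace ℝ (Fin d),
      Admissible Ω q p v u₁ → Admissible Ω q p v u₂ →
        LCRFM Ω q p v u₁ - LCRFM Ω q p v u₂ = LRFM Ω q p v u₁ - LRFM Ω q p v u₂ :=
  lcrfm_sub_lrfm_const_general Ω hΩ q hq_nonneg hq_int p hp_meas hp_nonneg hp_int v hv_meas hv_int
    hvM_int u hu
end

section
/- Fix d ∈ ℕ, σ_min ∈ (0,1), and a probability density q on ℝ^d. For t ∈ (0,1) set s_t = 1 − (1 − σ_min) t, and define the Gaussian conditional probability path p_t(x|x₁) = (2π s_t²)^{−d/2} exp( −‖x − t x₁‖² / (2 s_t²) ) and the optimal transport conditional velocity field v_t(x|x₁) = (x₁ − (1 − σ_min) x)/s_t. Define the marginal density p_t(x) = ∫_{ℝ^d} p_t(x|x₁) q(x₁) dx₁ (assumed positive) and the marginal velocity field v_t(x) = ∫_{ℝ^d} v_t(x|x₁) p_t(x|x₁) q(x₁) / p_t(x) dx₁. Assume the gradient in x may be interchanged with the integral defining p_t(x). Then for every x ∈ ℝ^d and t ∈ (0,1): v_t(x) =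 x/t + (s_t / t) ∇_x log p_t(x). -/
open MeasureTheory Set InnerProductSpace

section Aux

variable {F : Type*} [NormedAddCommGroup F] [InnerProductSpace ℝ F] [CompleteSpace F]

lemma gaussHasGradientAt (c : F) (C a : ℝ) (x : F) :
    HasGradientAt (fun y => C * Real.exp (a * ‖y - c‖ ^ 2))
      ((C * Real.exp (a * ‖x - c‖ ^ 2) * (2 * a)) • (x - c)) x := by
  have h0 : HasFDerivAt (fun y : F => y - c) (ContinuousLinearMap.id ℝ F) x :=
    (hasFDerivAt_id x).sub_const c
  have h1 := (h0.inner ℝ h0)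
  have h1' : HasFDerivAt (fun y : F => ‖y - c‖ ^ 2)
      ((fderivInnerCLM ℝ (x - c, x - c)).comp
        ((ContinuousLinearMap.id ℝ F).prod (ContinuousLinearMap.id ℝ F))) x := by
    simpa [real_inner_self_eq_norm_sq] using h1
  have h2 := ((h1'.const_mul a).exp).const_mul C
  rw [hasGradientAt_iff_hasFDerivAt]
  refine h2.congr_fderiv ?_
  ext w
  simp [toDual_apply_apply, real_inner_smul_left, fderivInnerCLM_apply,
    real_inner_comm (x - c) w, inner_sub_left]
  ring

lemma gradient_log_eq (f : F → ℝ) (x : F) (hf : ∀ y, 0 < f y) :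
    gradient (fun y => Real.log (f y)) x = (f x)⁻¹ • gradient f x := by
  by_cases hdiff : DifferentiableAt ℝ f x
  · have h := (hdiff.hasFDerivAt.log (hf x).ne')
    unfold gradient
    rw [h.fderiv]
    exact (toDual ℝ F).symm.map_smul _ _
  · have hdiff2 : ¬ DifferentiableAt ℝ (fun y => Real.log (f y)) x := by
      intro hc
      exact hdiff (by
        have : f = fun y => Real.exp (Real.log (f y)) := by
          funext y; rw [Real.exp_log (hf y)]
        rw [this]; exact hc.exp)
    rw [gradient_eq_zero_of_not_differentiableAt hdiff,
      gradient_eq_zero_of_not_differentiableAt hdiff2, smul_zero]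

lemma mul_exp_neg_sq_le (γ : ℝ) (hγ : 0 < γ) (u : ℝ) (hu : 0 ≤ u) :
    u * Real.exp (-(γ * u ^ 2)) ≤ 1 + γ⁻¹ := by
  rcases le_total u 1 with h | h
  · have he : Real.exp (-(γ * u ^ 2)) ≤ 1 :=
      Real.exp_le_one_iff.2 (neg_nonpos.2 (by positivity))
    have hep := (Real.exp_pos (-(γ * u ^ 2))).le
    have := inv_pos.2 hγ
    nlinarith
  · have h2 : u * Real.exp (-(γ * u ^ 2)) ≤ u / (γ * u ^ 2) := by
      rw [Real.exp_neg, div_eq_mul_inv]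
      apply mul_le_mul_of_nonneg_left _ hu
      apply inv_anti₀ (by positivity)
      exact Real.add_one_le_exp _ |>.trans' (by linarith)
    have h3 : u / (γ * u ^ 2) = γ⁻¹ / u := by field_simp
    rw [h3] at h2
    calc u * Real.exp (-(γ * u ^ 2)) ≤ γ⁻¹ / u := h2
      _ ≤ γ⁻¹ := by rw [div_le_iff₀ (by linarith)]; nlinarith [inv_pos.2 hγ]
      _ ≤ 1 + γ⁻¹ := by linarith

end Aux

/-- **The marginal OT velocity field rewritten via the score** (Theorem 5 of
"Reflected Flow Matching"). With the Gaussian conditional probability path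
`p_t(x|x₁) = N(t x₁, s_t² I_d)`, `s_t = 1 − (1 − σ_min)t`, and the OT
conditional velocity field `v_t(x|x₁) = (x₁ − (1 − σ_min)x)/s_t`, the marginal
velocity field satisfies `v_t(x) = x/t + (s_t/t) ∇ log p_t(x)` for `t ∈ (0,1)`. -/
theorem ot_marginal_velocity_eq_score {d : ℕ}
    (σmin : ℝ) (hσ : σmin ∈ Ioo (0:ℝ) 1)
    (q : EuclideanSpace ℝ (Fin d) → ℝ)
    (hq_nonneg : ∀ x₁, 0 ≤ q x₁) (hq_int : ∫ x₁, q x₁ = 1)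
    (pc : ℝ → EuclideanSpace ℝ (Fin d) → EuclideanSpace ℝ (Fin d) → ℝ)
    (hpc : ∀ t x₁ x, pc t x₁ x =
      (2 * Real.pi * (1 - (1 - σmin) * t) ^ 2) ^ (-(d : ℝ) / 2) *
        Real.exp (-‖x - t • x₁‖ ^ 2 / (2 * (1 - (1 - σmin) * t) ^ 2)))
    (vc : ℝ → EuclideanSpace ℝ (Fin d) → EuclideanSpace ℝ (Fin d) → EuclideanSpace ℝ (Fin d))
    (hvc : ∀ t x₁ x, vc t x₁ x = (1 - (1 - σmin) * t)⁻¹ • (x₁ - (1 - σmin) • x))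
    (pM : ℝ → EuclideanSpace ℝ (Fin d) → ℝ)
    (hpM : ∀ t x, pM t x = ∫ x₁, pc t x₁ x * q x₁)
    (hpos : ∀ t ∈ Ioo (0:ℝ) 1, ∀ x, 0 < pM t x)
    (vM : ℝ → EuclideanSpace ℝ (Fin d) → EuclideanSpace ℝ (Fin d))
    (hvM : ∀ t x, vM t x = (pM t x)⁻¹ • ∫ x₁, (pc t x₁ x * q x₁) • vc t x₁ x)
    (hswap : ∀ t ∈ Ioo (0:ℝ) 1, ∀ x,
      gradient (fun y => pM t y) x = ∫ x₁, q x₁ • gradient (fun y => pc t x₁ y) x) :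
    ∀ t ∈ Ioo (0:ℝ) 1, ∀ x,
      vM t x = t⁻¹ • x + ((1 - (1 - σmin) * t) / t) •
        gradient (fun y => Real.log (pM t y)) x := by
  obtain ⟨hσ0, hσ1⟩ := hσ
  intro t ht x
  obtain ⟨ht0, ht1⟩ := ht
  set s : ℝ := 1 - (1 - σmin) * t with hs_def
  have hs : 0 < s := by nlinarith
  set C : ℝ := (2 * Real.pi * s ^ 2) ^ (-(d : ℝ) / 2) with hC_def
  have hC : 0 < C := Real.rpow_pos_of_pos (by positivity) _
  set a : ℝ := -(2 * s ^ 2)⁻¹ with ha_def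
  -- rewrite pc in exp-normal form
  have hpc' : ∀ x₁ y, pc t x₁ y = C * Real.exp (a * ‖y - t • x₁‖ ^ 2) := by
    intro x₁ y
    rw [hpc]
    congr 1
    rw [ha_def, hs_def]
    congr 1
    ring
  have hpc_pos : ∀ x₁ y, 0 < pc t x₁ y := by
    intro x₁ y; rw [hpc']; positivity
  -- gradient of the conditional path
  have hg : ∀ x₁, gradient (fun y => pc t x₁ y) x
      = (-(s ^ 2)⁻¹ * pc t x₁ x) • (x - t • x₁) := by
    intro x₁
    have h1 : HasGradientAt (fun y => pc t x₁ y)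
        ((C * Real.exp (a * ‖x - t • x₁‖ ^ 2) * (2 * a)) • (x - t • x₁)) x :=
      (gaussHasGradientAt (t • x₁) C a x).congr_of_eventuallyEq
        (Filter.Eventually.of_forall fun y => hpc' x₁ y)
    rw [h1.gradient, hpc' x₁ x]
    congr 1
    rw [ha_def]
    field_simp
  -- q is integrable
  have hqI : Integrable q := by
    by_contra h
    rw [integral_undef h] at hq_int
    norm_num at hq_int
  -- the basic integrand is integrable
  have hI1gen : ∀ t' ∈ Ioo (0:ℝ) 1, ∀ x', Integrable (fun x₁ => pc t' x₁ x' * q x₁) := by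
    intro t' ht' x'
    by_contra h
    have := hpos t' ht' x'
    rw [hpM, integral_undef h] at this
    exact lt_irrefl _ this
  have I1 : Integrable (fun x₁ => pc t x₁ x * q x₁) := hI1gen t ⟨ht0, ht1⟩ x
  -- the gradient integrand is integrable (domination)
  set t' : ℝ := t / 2 with ht'_def
  have ht'mem : t' ∈ Ioo (0:ℝ) 1 := ⟨by positivity, by rw [ht'_def]; linarith⟩
  set s' : ℝ := 1 - (1 - σmin) * t' with hs'_def
  have hs' : 0 < s' := by rw [hs'_def, ht'_def]; nlinarith
  have hss' : s ≤ s' := by rw [hs_def, hs'_def, ht'_def]; nlinarith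
  set x' : EuclideanSpace ℝ (Fin d) := (2:ℝ)⁻¹ • x with hx'_def
  set C' : ℝ := (2 * Real.pi * s' ^ 2) ^ (-(d : ℝ) / 2) with hC'_def
  have hC' : 0 < C' := Real.rpow_pos_of_pos (by positivity) _
  set α : ℝ := (2 * s ^ 2)⁻¹ with hα_def
  set β : ℝ := (8 * s' ^ 2)⁻¹ with hβ_def
  set γ : ℝ := α - β with hγ_def
  have hγ : 0 < γ := by
    rw [hγ_def, hα_def, hβ_def, sub_pos]
    apply inv_strictAnti₀ (by positivity)
    nlinarith
  set M : ℝ := 1 + γ⁻¹ with hM_def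
  have hM : 0 < M := by rw [hM_def]; have := inv_pos.2 hγ; linarith
  set K : ℝ := C * M / C' with hK_def
  have hI1' : Integrable (fun x₁ => pc t' x₁ x' * q x₁) := hI1gen t' ht'mem x'
  -- pointwise bound
  have hbound : ∀ x₁, pc t x₁ x * ‖x - t • x₁‖ ≤ K * pc t' x₁ x' := by
    intro x₁
    set r : ℝ := ‖x - t • x₁‖ with hr_def
    have hr : 0 ≤ r := norm_nonneg _
    have hxx' : x' - t' • x₁ = (2:ℝ)⁻¹ • (x - t • x₁) := by
      rw [hx'_def, ht'_def, smul_sub, smul_smul]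
      congr 2
      ring
    have hnorm' : ‖x' - t' • x₁‖ = (2:ℝ)⁻¹ * r := by
      rw [hxx', norm_smul, hr_def]
      simp
    have hpct : pc t x₁ x = C * Real.exp (-(α * r ^ 2)) := by
      rw [hpc' x₁ x, ha_def, hα_def, ← hr_def]; ring_nf
    have hexp : -(2⁻¹ * r) ^ 2 / (2 * s' ^ 2) = -(β * r ^ 2) := by
      have h : (s' : ℝ) ≠ 0 := hs'.ne'
      rw [hβ_def]
      field_simp
      ring
    have hpct' : pc t' x₁ x' = C' * Real.exp (-(β * r ^ 2)) := by
      rw [hpc t', hnorm', ← hs'_def, ← hC'_def, hexp]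
    rw [hpct, hpct']
    have key : r * Real.exp (-(α * r ^ 2)) ≤ M * Real.exp (-(β * r ^ 2)) := by
      have : Real.exp (-(α * r ^ 2)) = Real.exp (-(γ * r ^ 2)) * Real.exp (-(β * r ^ 2)) := by
        rw [← Real.exp_add]
        congr 1
        rw [hγ_def]; ring
      rw [this, ← mul_assoc]
      apply mul_le_mul_of_nonneg_right _ (Real.exp_pos _).le
      exact mul_exp_neg_sq_le γ hγ r hr
    calc C * Real.exp (-(α * r ^ 2)) * r = C * (r * Real.exp (-(α * r ^ 2))) := by ring
      _ ≤ C * (M * Real.exp (-(β * r ^ 2))) :=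
          mul_le_mul_of_nonneg_left key hC.le
      _ = K * (C' * Real.exp (-(β * r ^ 2))) := by
          rw [hK_def]; field_simp
  have I2 : Integrable (fun x₁ => (pc t x₁ x * q x₁) • (x - t • x₁)) := by
    apply Integrable.mono' (hI1'.const_mul K)
    · apply AEStronglyMeasurable.smul I1.aestronglyMeasurable
      exact (continuous_const.sub (continuous_id.const_smul t)).aestronglyMeasurable
    · apply Filter.Eventually.of_forall
      intro x₁
      rw [norm_smul, Real.norm_eq_abs,
        abs_of_nonneg (mul_nonneg (hpc_pos x₁ x).le (hq_nonneg x₁))]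
      calc pc t x₁ x * q x₁ * ‖x - t • x₁‖
          = q x₁ * (pc t x₁ x * ‖x - t • x₁‖) := by ring
        _ ≤ q x₁ * (K * pc t' x₁ x') :=
            mul_le_mul_of_nonneg_left (hbound x₁) (hq_nonneg x₁)
        _ = K * (pc t' x₁ x' * q x₁) := by ring
  have I3 : Integrable (fun x₁ => q x₁ • gradient (fun y => pc t x₁ y) x) := by
    apply (I2.smul (-(s ^ 2)⁻¹ : ℝ)).congr
    apply Filter.Eventually.of_forall
    intro x₁
    simp only [Pi.smul_apply]
    rw [hg x₁]
    match_scalars <;> ring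
  -- split the integral
  have I4 : Integrable
      (fun x₁ => (s / t) • (q x₁ • gradient (fun y => pc t x₁ y) x)) :=
    (I3.smul (s / t)).congr (Filter.Eventually.of_forall fun _ => rfl)
  have hsplit : (∫ x₁, (pc t x₁ x * q x₁) • vc t x₁ x)
      = (∫ x₁, pc t x₁ x * q x₁) • (t⁻¹ • x)
        + (s / t) • ∫ x₁, q x₁ • gradient (fun y => pc t x₁ y) x := by
    have e1 : (fun x₁ => (pc t x₁ x * q x₁) • vc t x₁ x)
        = fun x₁ => (pc t x₁ x * q x₁) • (t⁻¹ • x)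
          + (s / t) • (q x₁ • gradient (fun y => pc t x₁ y) x) := by
      funext x₁
      rw [hvc, hg x₁, ← hs_def]
      match_scalars <;> field_simp <;> ring
    rw [e1, integral_add (I1.smul_const (t⁻¹ • x)) I4, integral_smul_const, integral_smul]
  -- put everything together
  have hpMx := hpos t ⟨ht0, ht1⟩ x
  rw [hvM, hsplit, ← hpM, ← hswap t ⟨ht0, ht1⟩ x,
    gradient_log_eq (fun y => pM t y) x (fun y => hpos t ⟨ht0, ht1⟩ y)]
  rw [smul_add, smul_smul, inv_mul_cancel₀ hpMx.ne', one_smul, smul_smul, smul_smul]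
  congr 1
  ring
end

section
/- Let E be a finite-dimensional real inner product space, M ≥ 0, and let v, u : [0,1] × E → E be such that u(t, ·) is M-Lipschitz in its spatial argument for every t ∈ [0,1]. Let x, y : [0,1] → E be differentiable curves with x'(t) = v(t, x(t)), y'(t) = u(t, y(t)) for all t ∈ (0,1), and x(0) = y(0). Assume t ↦ ‖v(t, x(t)) − u(t, x(t))‖² is integrable on [0,1]. Then ‖x(1) − y(1)‖² ≤ e^{1 + 2M} ∫₀¹ ‖v(t, x(t)) − u(t, x(t))‖² dt. -/
open Set intervalIntegral MeasureTheory

/-- **Deterministic core of the Wasserstein bound for flow matching.**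
Let `E` be a finite-dimensional real inner product space, `u(t,·)` an
`M`-Lipschitz velocity model, and `x, y` trajectories of `v` and `u`
respectively with the same initial point. Then
`‖x(1) − y(1)‖² ≤ e^{1+2M} ∫₀¹ ‖v(t,x(t)) − u(t,x(t))‖² dt`. -/
theorem wasserstein_core_bound
    {E : Type*} [NormedAddCommGroup E] [InnerProductSpace ℝ E] [FiniteDimensional ℝ E]
    (M : ℝ) (hM : 0 ≤ M)
    (v u : ℝ → E → E)
    (hu_lip : ∀ t ∈ Icc (0:ℝ) 1, ∀ a b : E, ‖u t a - u t b‖ ≤ M * ‖a - b‖)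
    (x y : ℝ → E)
    (hx_cont : ContinuousOn x (Icc 0 1)) (hy_cont : ContinuousOn y (Icc 0 1))
    (hx : ∀ t ∈ Ioo (0:ℝ) 1, HasDerivAt x (v t (x t)) t)
    (hy : ∀ t ∈ Ioo (0:ℝ) 1, HasDerivAt y (u t (y t)) t)
    (h0 : x 0 = y 0)
    (hint : IntervalIntegrable (fun t => ‖v t (x t) - u t (x t)‖ ^ 2)
      MeasureTheory.volume 0 1) :
    ‖x 1 - y 1‖ ^ 2 ≤ Real.exp (1 + 2 * M) * ∫ t in (0:ℝ)..1, ‖v t (x t) - u t (x t)‖ ^ 2 := by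
  borelize E
  set K : ℝ := 1 + 2 * M with hKdef
  have hK0 : (0:ℝ) < K := by rw [hKdef]; linarith
  -- uniform bound on ‖x t - y t‖
  obtain ⟨C, hC0, hC⟩ : ∃ C, 0 ≤ C ∧ ∀ t ∈ Icc (0:ℝ) 1, ‖x t - y t‖ ≤ C := by
    obtain ⟨C, hC⟩ := isCompact_Icc.exists_bound_of_continuousOn (hx_cont.sub hy_cont)
    exact ⟨max C 0, le_max_right _ _, fun t ht => (hC t ht).trans (le_max_left _ _)⟩
  set ε : ℝ → ℝ := fun t => ‖v t (x t) - u t (x t)‖ ^ 2 with hεdef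
  have hε0 : ∀ t, 0 ≤ ε t := fun t => sq_nonneg _
  set f : ℝ → ℝ := fun t => Real.exp (-K * t) *
      (2 * (inner ℝ (deriv x t - deriv y t) (x t - y t) : ℝ) - K * ‖x t - y t‖ ^ 2) with hfdef
  set g : ℝ → ℝ := (Ioo (0:ℝ) 1).indicator f with hgdef
  set ψ : ℝ → ℝ := fun t => Real.exp (-K * t) * ‖x t - y t‖ ^ 2 with hψdef
  have hψcont : ContinuousOn ψ (Icc 0 1) :=
    ((Real.continuous_exp.comp (continuous_const.mul continuous_id)).continuousOn).mul
      (((hx_cont.sub hy_cont).norm).pow 2)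
  -- derivative of ψ on Ioo
  have hderiv : ∀ t ∈ Ioo (0:ℝ) 1, HasDerivAt ψ (g t) t := by
    intro t ht
    have hx' := hx t ht
    have hy' := hy t ht
    have hΔ : HasDerivAt (fun s => x s - y s) (v t (x t) - u t (y t)) t := hx'.sub hy'
    have hin := hΔ.inner ℝ hΔ
    have hexp : HasDerivAt (fun s : ℝ => Real.exp (-K * s)) (Real.exp (-K * t) * (-K)) t := by
      have h1 : HasDerivAt (fun s : ℝ => -K * s) (-K) t := by
        simpa using (hasDerivAt_id t).const_mul (-K)
      exact h1.exp
    have hprod := hexp.mul hin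
    have hψeq : ψ = fun s => Real.exp (-K * s) * (inner ℝ (x s - y s) (x s - y s) : ℝ) := by
      funext s; rw [hψdef]; simp [real_inner_self_eq_norm_sq]
    rw [hψeq]
    refine hprod.congr_deriv ?_
    rw [hgdef, indicator_of_mem ht, hfdef]
    simp only [hx'.deriv, hy'.deriv]
    rw [real_inner_self_eq_norm_sq,
      real_inner_comm (x t - y t) (v t (x t) - u t (y t))]
    ring
  -- integrability facts
  have hεIoc : IntegrableOn ε (Ioc 0 1) volume := by
    have := hint
    rwa [intervalIntegrable_iff, uIoc_of_le (by norm_num : (0:ℝ) ≤ 1)] at this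
  have hsqrt : IntegrableOn (fun t => Real.sqrt (ε t)) (Ioc 0 1) volume := by
    apply Integrable.mono' (g := fun t => (1 + ε t) / 2)
    · exact ((integrable_const 1).add hεIoc).div_const 2
    · exact (Real.continuous_sqrt.comp_aestronglyMeasurable hεIoc.aestronglyMeasurable)
    · refine Filter.Eventually.of_forall fun t => ?_
      have h1 : 0 ≤ ε t := hε0 t
      have h2 := Real.sq_sqrt h1
      have h3 := Real.sqrt_nonneg (ε t)
      rw [Real.norm_eq_abs, abs_of_nonneg h3]
      nlinarith [sq_nonneg (Real.sqrt (ε t) - 1)]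
  have hfInt : IntegrableOn f (Ioo 0 1) volume := by
    have hmx : AEStronglyMeasurable x (volume.restrict (Ioo (0:ℝ) 1)) :=
      (hx_cont.mono Ioo_subset_Icc_self).aestronglyMeasurable measurableSet_Ioo
    have hmy : AEStronglyMeasurable y (volume.restrict (Ioo (0:ℝ) 1)) :=
      (hy_cont.mono Ioo_subset_Icc_self).aestronglyMeasurable measurableSet_Ioo
    have hmd : AEStronglyMeasurable (fun t => deriv x t - deriv y t)
        (volume.restrict (Ioo (0:ℝ) 1)) :=
      ((measurable_deriv x).sub (measurable_deriv y)).aestronglyMeasurable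
    have hmf : AEStronglyMeasurable f (volume.restrict (Ioo (0:ℝ) 1)) := by
      apply AEStronglyMeasurable.mul
      · exact (Real.continuous_exp.comp (continuous_const.mul continuous_id)).aestronglyMeasurable
      · exact ((aestronglyMeasurable_const.mul (hmd.inner (hmx.sub hmy))).sub
          (aestronglyMeasurable_const.mul (((hmx.sub hmy).norm).pow 2)))
    apply Integrable.mono' (g := fun t => 2 * C * (Real.sqrt (ε t) + M * C) + K * C ^ 2)
    · exact (((hsqrt.mono_set Ioo_subset_Ioc_self).add
        (integrable_const (M * C))).const_mul (2 * C)).add (integrable_const (K * C ^ 2))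
    · exact hmf
    · filter_upwards [ae_restrict_mem measurableSet_Ioo] with t ht
      have hx' := hx t ht
      have hy' := hy t ht
      have htI : t ∈ Icc (0:ℝ) 1 := Ioo_subset_Icc_self ht
      have hΔC : ‖x t - y t‖ ≤ C := hC t htI
      have hexp1 : Real.exp (-K * t) ≤ 1 := by
        apply Real.exp_le_one_iff.2
        nlinarith [ht.1]
      have hw : ‖deriv x t - deriv y t‖ ≤ Real.sqrt (ε t) + M * C := by
        rw [hx'.deriv, hy'.deriv]
        have h1 : ‖v t (x t) - u t (y t)‖ ≤ ‖v t (x t) - u t (x t)‖ + ‖u t (x t) - u t (y t)‖ := by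
          have := norm_add_le (v t (x t) - u t (x t)) (u t (x t) - u t (y t))
          simpa using this
        have h2 : ‖u t (x t) - u t (y t)‖ ≤ M * ‖x t - y t‖ := hu_lip t htI _ _
        have h3 : Real.sqrt (ε t) = ‖v t (x t) - u t (x t)‖ := by
          rw [hεdef]; exact Real.sqrt_sq (norm_nonneg _)
        rw [h3]
        have h4 : M * ‖x t - y t‖ ≤ M * C := mul_le_mul_of_nonneg_left hΔC hM
        linarith
      have hiw : |(inner ℝ (deriv x t - deriv y t) (x t - y t) : ℝ)| ≤
          (Real.sqrt (ε t) + M * C) * C := by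
        refine (abs_real_inner_le_norm _ _).trans ?_
        have := Real.sqrt_nonneg (ε t)
        apply mul_le_mul hw hΔC (norm_nonneg _)
        nlinarith
      rw [hfdef, Real.norm_eq_abs, abs_mul, abs_of_nonneg (Real.exp_pos _).le]
      calc Real.exp (-K * t) * |2 * (inner ℝ (deriv x t - deriv y t) (x t - y t) : ℝ)
            - K * ‖x t - y t‖ ^ 2|
          ≤ 1 * |2 * (inner ℝ (deriv x t - deriv y t) (x t - y t) : ℝ)
            - K * ‖x t - y t‖ ^ 2| := by
            apply mul_le_mul_of_nonneg_right hexp1 (abs_nonneg _)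
        _ ≤ 2 * C * (Real.sqrt (ε t) + M * C) + K * C ^ 2 := by
            rw [one_mul]
            refine (abs_sub _ _).trans ?_
            rw [abs_mul, abs_mul]
            have h5 : |(2:ℝ)| = 2 := by norm_num
            have h6 : |K| = K := abs_of_pos hK0
            have h7 : |‖x t - y t‖ ^ 2| ≤ C ^ 2 := by
              rw [abs_of_nonneg (sq_nonneg _)]
              exact pow_le_pow_left₀ (norm_nonneg _) hΔC 2
            rw [h5, h6]
            have := Real.sqrt_nonneg (ε t)
            nlinarith
  have hg_int : IntervalIntegrable g volume 0 1 := by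
    rw [intervalIntegrable_iff, uIoc_of_le (by norm_num : (0:ℝ) ≤ 1)]
    exact ((integrable_indicator_iff measurableSet_Ioo).2 hfInt).integrableOn
  -- FTC
  have hFTC : ∫ t in (0:ℝ)..1, g t = ψ 1 - ψ 0 :=
    integral_eq_sub_of_hasDeriv_right_of_le (by norm_num) hψcont
      (fun t ht => (hderiv t ht).hasDerivWithinAt) hg_int
  have hψ0 : ψ 0 = 0 := by rw [hψdef]; simp [h0]
  -- pointwise bound g ≤ ε on Icc
  have hgε : ∀ t ∈ Icc (0:ℝ) 1, g t ≤ ε t := by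
    intro t ht
    by_cases hmem : t ∈ Ioo (0:ℝ) 1
    · rw [hgdef, indicator_of_mem hmem, hfdef]
      have hx' := hx t hmem
      have hy' := hy t hmem
      simp only [hx'.deriv, hy'.deriv]
      have ha : 2 * (inner ℝ (v t (x t) - u t (y t)) (x t - y t) : ℝ)
          - K * ‖x t - y t‖ ^ 2 ≤ ε t := by
        have hsplit : (inner ℝ (v t (x t) - u t (y t)) (x t - y t) : ℝ) =
            (inner ℝ (v t (x t) - u t (x t)) (x t - y t) : ℝ)
            + (inner ℝ (u t (x t) - u t (y t)) (x t - y t) : ℝ) := by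
          rw [← inner_add_left]
          congr 1
          abel
        have h1 : (inner ℝ (v t (x t) - u t (x t)) (x t - y t) : ℝ) ≤
            ‖v t (x t) - u t (x t)‖ * ‖x t - y t‖ := real_inner_le_norm _ _
        have h2 : (inner ℝ (u t (x t) - u t (y t)) (x t - y t) : ℝ) ≤
            ‖u t (x t) - u t (y t)‖ * ‖x t - y t‖ := real_inner_le_norm _ _
        have h3 : ‖u t (x t) - u t (y t)‖ ≤ M * ‖x t - y t‖ := hu_lip t ht _ _
        have h4 : ‖u t (x t) - u t (y t)‖ * ‖x t - y t‖ ≤ M * ‖x t - y t‖ ^ 2 := by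
          have := mul_le_mul_of_nonneg_right h3 (norm_nonneg (x t - y t))
          nlinarith [norm_nonneg (x t - y t)]
        rw [hsplit, hKdef]
        have hεt : ε t = ‖v t (x t) - u t (x t)‖ ^ 2 := rfl
        rw [hεt]
        nlinarith [sq_nonneg (‖v t (x t) - u t (x t)‖ - ‖x t - y t‖)]
      rcases le_or_gt (2 * (inner ℝ (v t (x t) - u t (y t)) (x t - y t) : ℝ)
          - K * ‖x t - y t‖ ^ 2) 0 with h | h
      · exact le_trans (mul_nonpos_of_nonneg_of_nonpos (Real.exp_pos _).le h) (hε0 t)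
      · calc Real.exp (-K * t) * _ ≤ 1 * _ :=
              mul_le_mul_of_nonneg_right (Real.exp_le_one_iff.2 (by nlinarith [ht.1])) h.le
          _ ≤ ε t := by rw [one_mul]; exact ha
    · rw [hgdef, indicator_of_notMem hmem]
      exact hε0 t
  -- assemble
  have hmono : ∫ t in (0:ℝ)..1, g t ≤ ∫ t in (0:ℝ)..1, ε t :=
    integral_mono_on (by norm_num) hg_int hint hgε
  rw [hFTC, hψ0, sub_zero] at hmono
  have hψ1 : ψ 1 = Real.exp (-K) * ‖x 1 - y 1‖ ^ 2 := by rw [hψdef]; norm_num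
  rw [hψ1] at hmono
  have hfin := mul_le_mul_of_nonneg_left hmono (Real.exp_pos K).le
  rw [← mul_assoc, ← Real.exp_add] at hfin
  simpa using hfin
end
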